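/- Let G be a simple undirected unweighted graph on vertex set {1,…,n} in which every vertex i has degree d_i ≥ 1. Let Ā = D^{−1/2} A D^{−1/2} be the symmetric normalized adjacency matrix, where A is the adjacency matrix and D = diag(d_1,…,d_n), and let Ā^i denote the i-th column of Ā. For each i set p_i = (1/(n·d_i))·Σ_{j ∈ N(i)} 1/d_j, where N(i) is the set of neighbors of i, and note p_i > 0. Then for every y ∈ ℝ^n: Σ_{i=1}^{n} p_i·‖(y_i/p_i)·Ā^i − Āy‖₂² + (1 − Σ_{i=1}^{n} p_i)·‖Āy‖₂² = n·‖y‖₂² − ‖Āy‖₂². (Equivalently, the single-sample column estimator w, which equals (y_i/p_i)·Ā^i with probability p_i and the zero vector with probability 1 − Σ_i p_i, is unbiased for Āy and satisfies E‖Āy − w‖₂² = n‖y‖₂² − ‖Āy‖₂².) -/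
import Mathlib


open Matrix

/-- The symmetric normalized adjacency matrix `Ā = D^{-1/2} A D^{-1/2}` of a simple
graph: entry `(j,i)` is `1/√(d_j·d_i)` if `{j,i}` is an edge and `0` otherwise. -/
noncomputable def normAdj {n : ℕ} (G : SimpleGraph (Fin n)) [DecidableRel G.Adj] :
    Matrix (Fin n) (Fin n) ℝ :=
  fun j i => if G.Adj j i then 1 / Real.sqrt ((G.degree j : ℝ) * (G.degree i : ℝ)) else 0

/-- The acceptance probability `p_i = (1/(n·d_i))·Σ_{j ∈ N(i)} 1/d_j` used by the
randomized column-sampling matrix-vector multiplication algorithm. -/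
noncomputable def colProb {n : ℕ} (G : SimpleGraph (Fin n)) [DecidableRel G.Adj]
    (i : Fin n) : ℝ :=
  (1 / ((n : ℝ) * (G.degree i : ℝ))) * ∑ j ∈ G.neighborFinset i, 1 / (G.degree j : ℝ)

/-- **Variance of the randomized column estimator for normalized adjacency
matrix-vector multiplication.**  Every `p_i` is positive, and the single-sample
estimator `w` — equal to `(y_i/p_i)·Ā^i` with probability `p_i` and to `0` with
probability `1 - Σ_i p_i` — is unbiased for `Āy` with
`E‖Āy - w‖₂² = n‖y‖₂² - ‖Āy‖₂²`. -/
theorem normAdj_column_sampling_variance {n : ℕ} (hn : 0 < n)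
    (G : SimpleGraph (Fin n)) [DecidableRel G.Adj]
    (hdeg : ∀ i, 0 < G.degree i) (y : Fin n → ℝ) :
    (∀ i, 0 < colProb G i) ∧
    (∑ i, colProb G i *
        ∑ j, ((y i / colProb G i) * normAdj G j i - (normAdj G).mulVec y j) ^ 2)
      + (1 - ∑ i, colProb G i) * (∑ j, ((normAdj G).mulVec y j) ^ 2)
      = (n : ℝ) * (∑ i, y i ^ 2) - ∑ j, ((normAdj G).mulVec y j) ^ 2 := by
  have hn' : (0:ℝ) < n := by exact_mod_cast hn
  have hd : ∀ i, (0:ℝ) < (G.degree i : ℝ) := fun i => by exact_mod_cast hdeg i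
  have hpos : ∀ i, 0 < colProb G i := by
    intro i
    unfold colProb
    apply mul_pos
    · exact div_pos one_pos (mul_pos hn' (hd i))
    · apply Finset.sum_pos
      · intro j _
        exact div_pos one_pos (hd j)
      · rw [← Finset.card_pos, G.card_neighborFinset_eq_degree]
        exact hdeg i
  set M := normAdj G with hM
  set v := (normAdj G).mulVec y with hv
  have hvj : ∀ j, v j = ∑ i, M j i * y i := by
    intro j
    simp [hv, Matrix.mulVec, dotProduct, hM]
  have hcol : ∀ i, (∑ j, M j i ^ 2) = (n : ℝ) * colProb G i := by
    intro i
    have h1 : (∑ j, M j i ^ 2)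
        = ∑ j ∈ G.neighborFinset i, 1 / ((G.degree j : ℝ) * (G.degree i : ℝ)) := by
      have hfil : G.neighborFinset i = Finset.univ.filter (fun j => G.Adj j i) := by
        ext j; simp [G.adj_comm]
      rw [hfil, Finset.sum_filter]
      apply Finset.sum_congr rfl
      intro j _
      simp only [hM, normAdj]
      split
      · rw [div_pow, one_pow, Real.sq_sqrt (by positivity)]
      · simp
    rw [h1]
    unfold colProb
    rw [Finset.mul_sum, Finset.mul_sum]
    apply Finset.sum_congr rfl
    intro j hj
    have hdj : (0:ℝ) < (G.degree j : ℝ) := hd j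
    have hdi := hd i
    field_simp
  have hexp : ∀ i, colProb G i * ∑ j, ((y i / colProb G i) * M j i - v j) ^ 2
      = (n : ℝ) * y i ^ 2 - 2 * (y i * ∑ j, M j i * v j)
        + colProb G i * ∑ j, v j ^ 2 := by
    intro i
    have hp := (hpos i).ne'
    have hsum : (∑ j, ((y i / colProb G i) * M j i - v j) ^ 2)
        = (y i / colProb G i) ^ 2 * (∑ j, M j i ^ 2)
          - 2 * (y i / colProb G i) * (∑ j, M j i * v j) + ∑ j, v j ^ 2 := by
      rw [Finset.mul_sum, Finset.mul_sum, ← Finset.sum_sub_distrib, ← Finset.sum_add_distrib]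
      exact Finset.sum_congr rfl fun j _ => by ring
    rw [hsum, hcol i]
    field_simp
  have hswap : (∑ i, y i * ∑ j, M j i * v j) = ∑ j, v j ^ 2 := by
    simp_rw [Finset.mul_sum]
    rw [Finset.sum_comm]
    apply Finset.sum_congr rfl
    intro j _
    have h2 : (∑ i, y i * (M j i * v j)) = (∑ i, M j i * y i) * v j := by
      rw [Finset.sum_mul]
      exact Finset.sum_congr rfl fun i _ => by ring
    rw [h2, ← hvj j, sq]
  refine ⟨hpos, ?_⟩
  rw [Finset.sum_congr rfl fun i _ => hexp i]
  rw [Finset.sum_add_distrib, Finset.sum_sub_distrib, ← Finset.mul_sum, ← Finset.mul_sum,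
    hswap, ← Finset.sum_mul]
  ring
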